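/- Let Φ : ℝ → ℝ be the odd extension of a smooth function ψ : [0,∞) → [0,1] with ψ = 1 on [0,1/2] and ψ = 0 on [1,∞) (so Φ(x) = ψ(x) for x > 0, Φ(x) = -ψ(-x) for x < 0). Let 0 < α < 1 and define (Λ^α Φ)(x) = c_α ∫_ℝ (Φ(x) - Φ(y))/|x-y|^{1+α} dy (as a principal value), with c_α > 0. Then there exist constants c > 0 and δ > 0 such that Λ^α Φ(x) ≥ c·x^{-α} for all 0 < x < δ. -/

import Mathlib

open MeasureTheory Set Real

theorem stmt9 (ψ Φ : ℝ → ℝ) (α cα : ℝ) (hα0 : 0 < α) (hα1 : α < 1) (hcα : 0 < cα)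
    (hψ : ContDiffOn ℝ (⊤ : ℕ∞) ψ (Set.Ici 0))
    (hψ01 : ∀ x ∈ Set.Ici (0 : ℝ), 0 ≤ ψ x ∧ ψ x ≤ 1)
    (hψ1 : ∀ x ∈ Set.Icc (0 : ℝ) (1 / 2), ψ x = 1)
    (hψ0 : ∀ x ∈ Set.Ici (1 : ℝ), ψ x = 0)
    (hΦp : ∀ x : ℝ, 0 < x → Φ x = ψ x)
    (hΦn : ∀ x : ℝ, x < 0 → Φ x = -ψ (-x)) :
    ∃ c > (0 : ℝ), ∃ δ > (0 : ℝ), ∀ x : ℝ, 0 < x → x < δ →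
      c * x ^ (-α) ≤ cα * ∫ y : ℝ, (Φ x - Φ y) / |x - y| ^ (1 + α) := by
  have ha : -(1 + α) < -1 := by linarith
  refine ⟨cα / α, by positivity, 1 / 4, by norm_num, ?_⟩
  intro x hx0 hx4
  -- ψ composed with abs is continuous
  have hψc : Continuous fun y : ℝ => ψ |y| :=
    hψ.continuousOn.comp_continuous continuous_abs fun y => abs_nonneg y
  set F : ℝ → ℝ := fun y => if y < 0 then -ψ |y| else if y = 0 then 0 else ψ |y| with hF_def
  have hFm : Measurable F :=
    Measurable.ite measurableSet_Iio hψc.neg.measurable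
      (Measurable.ite (measurableSet_eq) measurable_const hψc.measurable)
  have hψ01' : ∀ y : ℝ, 0 ≤ ψ |y| ∧ ψ |y| ≤ 1 := fun y => hψ01 _ (abs_nonneg y)
  have hF1 : ∀ y, F y ≤ 1 := by
    intro y
    rcases lt_trichotomy y 0 with h | h | h
    · simp only [hF_def, if_pos h]; linarith [(hψ01' y).1]
    · simp [hF_def, h]
    · simp only [hF_def, if_neg (not_lt.2 h.le), if_neg h.ne']; exact (hψ01' y).2
  have hFn : ∀ y, -1 ≤ F y := by
    intro y
    rcases lt_trichotomy y 0 with h | h | h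
    · simp only [hF_def, if_pos h]; linarith [(hψ01' y).2]
    · simp [hF_def, h]
    · simp only [hF_def, if_neg (not_lt.2 h.le), if_neg h.ne']; linarith [(hψ01' y).1]
  have hFeq : ∀ y : ℝ, y ≠ 0 → Φ y = F y := by
    intro y hy
    rcases hy.lt_or_gt with h | h
    · rw [hΦn y h]; simp only [hF_def, if_pos h, abs_of_neg h]
    · rw [hΦp y h]; simp only [hF_def, if_neg (not_lt.2 h.le), if_neg h.ne', abs_of_pos h]
  have hae : ∀ᵐ y : ℝ, Φ y = F y := by
    rw [ae_iff]
    refine measure_mono_null (fun y hy => ?_) (measure_singleton (0 : ℝ))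
    by_contra hne
    exact hy (hFeq y hne)
  have hx2 : x < 1 / 2 := by linarith
  have hΦx : Φ x = 1 := by rw [hΦp x hx0]; exact hψ1 x ⟨hx0.le, hx2.le⟩
  set g : ℝ → ℝ := fun y => (1 - F y) / |x - y| ^ (1 + α) with hg_def
  have hgm : Measurable g :=
    (measurable_const.sub hFm).div ((measurable_const.sub measurable_id).abs.pow measurable_const)
  have hg_nonneg : ∀ y, 0 ≤ g y := fun y =>
    div_nonneg (by linarith [hF1 y]) (rpow_nonneg (abs_nonneg _) _)
  have hcongr : (∫ y : ℝ, (Φ x - Φ y) / |x - y| ^ (1 + α)) = ∫ y : ℝ, g y := by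
    refine integral_congr_ae (hae.mono fun y hy => ?_)
    simp only [hΦx, hy, hg_def]
  -- integrability on (-∞, 0)
  have mpL : MeasurePreserving (fun y : ℝ => x - y) volume volume :=
    Measure.measurePreserving_sub_left volume x
  have embL : MeasurableEmbedding (fun y : ℝ => x - y) :=
    (MeasurableEquiv.subLeft x).measurableEmbedding
  have hpreL : (fun y : ℝ => x - y) ⁻¹' Ioi x = Iio 0 := by
    ext y
    simp only [mem_preimage, mem_Ioi, mem_Iio]
    constructor <;> intro <;> linarith
  have hIntBase : IntegrableOn (fun t : ℝ => t ^ (-(1 + α))) (Ioi x) :=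
    integrableOn_Ioi_rpow_of_lt ha hx0
  have hIntL : IntegrableOn (fun y : ℝ => (x - y) ^ (-(1 + α))) (Iio 0) := by
    have := (mpL.integrableOn_comp_preimage embL
      (f := fun t : ℝ => t ^ (-(1 + α))) (s := Ioi x)).mpr hIntBase
    rwa [hpreL] at this
  have hValL : (∫ y in Iio (0 : ℝ), (x - y) ^ (-(1 + α))) = x ^ (-α) / α := by
    have h1 := mpL.setIntegral_preimage_emb embL (fun t : ℝ => t ^ (-(1 + α))) (Ioi x)
    rw [hpreL] at h1
    rw [h1, integral_Ioi_rpow_of_lt ha hx0, show -(1 + α) + 1 = -α by ring, neg_div_neg_eq]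
  have hgle : ∀ y : ℝ, y < 0 → g y ≤ 2 * (x - y) ^ (-(1 + α)) := by
    intro y hy
    have hxy : (0 : ℝ) < x - y := by linarith
    rw [hg_def]
    simp only
    rw [abs_of_pos hxy, Real.rpow_neg hxy.le, div_eq_mul_inv]
    have h2 : 1 - F y ≤ 2 := by linarith [hFn y]
    have hinv : (0 : ℝ) ≤ ((x - y) ^ (1 + α))⁻¹ := by positivity
    exact mul_le_mul_of_nonneg_right h2 hinv
  have hIntIio : IntegrableOn g (Iio 0) := by
    refine Integrable.mono' (hIntL.const_mul 2) hgm.aestronglyMeasurable ?_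
    filter_upwards [ae_restrict_mem measurableSet_Iio] with y hy
    rw [Real.norm_eq_abs, abs_of_nonneg (hg_nonneg y)]
    exact hgle y hy
  -- integrability on [1/2, ∞)
  have mpR : MeasurePreserving (fun y : ℝ => y - x) volume volume :=
    measurePreserving_sub_right volume x
  have embR : MeasurableEmbedding (fun y : ℝ => y - x) :=
    (MeasurableEquiv.subRight x).measurableEmbedding
  have hpreR : (fun y : ℝ => y - x) ⁻¹' Ioi (1 / 4 : ℝ) = Ioi (1 / 4 + x) := by
    ext y
    simp only [mem_preimage, mem_Ioi]
    constructor <;> intro <;> linarith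
  have hIntR0 : IntegrableOn (fun y : ℝ => (y - x) ^ (-(1 + α))) (Ioi (1 / 4 + x)) := by
    have := (mpR.integrableOn_comp_preimage embR
      (f := fun t : ℝ => t ^ (-(1 + α))) (s := Ioi (1 / 4 : ℝ))).mpr
      (integrableOn_Ioi_rpow_of_lt ha (by norm_num))
    rwa [hpreR] at this
  have hIntR : IntegrableOn (fun y : ℝ => (y - x) ^ (-(1 + α))) (Ici (1 / 2 : ℝ)) :=
    hIntR0.mono (fun y hy => by simp only [mem_Ici] at hy; exact mem_Ioi.2 (by linarith)) le_rfl
  have hIntIci12 : IntegrableOn g (Ici (1 / 2 : ℝ)) := by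
    refine Integrable.mono' (hIntR.const_mul 2) hgm.aestronglyMeasurable ?_
    filter_upwards [ae_restrict_mem measurableSet_Ici] with y hy
    simp only [mem_Ici] at hy
    have hxy : (0 : ℝ) < y - x := by linarith
    rw [Real.norm_eq_abs, abs_of_nonneg (hg_nonneg y), hg_def]
    simp only
    rw [abs_sub_comm, abs_of_pos hxy, Real.rpow_neg hxy.le, div_eq_mul_inv]
    have h2 : 1 - F y ≤ 2 := by linarith [hFn y]
    have hinv : (0 : ℝ) ≤ ((y - x) ^ (1 + α))⁻¹ := by positivity
    exact mul_le_mul_of_nonneg_right h2 hinv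
  -- integrability on [0, 1/2]
  have hIntIcc : IntegrableOn g (Icc (0 : ℝ) (1 / 2)) := by
    refine Integrable.mono' (g := fun _ : ℝ => x ^ (-(1 + α)))
      (integrableOn_const measure_Icc_lt_top.ne) hgm.aestronglyMeasurable ?_
    filter_upwards [ae_restrict_mem measurableSet_Icc] with y hy
    rw [Real.norm_eq_abs, abs_of_nonneg (hg_nonneg y)]
    rcases eq_or_lt_of_le hy.1 with h0 | h0
    · have hF0 : F 0 = 0 := by simp [hF_def]
      rw [hg_def, ← h0]
      simp only [hF0, sub_zero, abs_of_pos hx0]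
      rw [Real.rpow_neg hx0.le, div_eq_mul_inv, one_mul]
    · have hFy : F y = 1 := by
        simp only [hF_def, if_neg (not_lt.2 h0.le), if_neg h0.ne', abs_of_pos h0]
        exact hψ1 y ⟨h0.le, hy.2⟩
      rw [hg_def]
      simp only [hFy, sub_self, zero_div]
      positivity
  have hIntIci : IntegrableOn g (Ici (0 : ℝ)) := by
    rw [← Icc_union_Ici_eq_Ici (by norm_num : (0 : ℝ) ≤ 1 / 2)]
    exact hIntIcc.union hIntIci12
  have hInt : Integrable g := by
    rw [← integrableOn_univ, ← Iio_union_Ici (a := (0 : ℝ))]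
    exact hIntIio.union hIntIci
  have hsplit : (∫ y in Iio (0 : ℝ), g y) + ∫ y in Ici (0 : ℝ), g y = ∫ y, g y :=
    intervalIntegral.integral_Iio_add_Ici hIntIio hIntIci
  have hIciNonneg : 0 ≤ ∫ y in Ici (0 : ℝ), g y :=
    setIntegral_nonneg measurableSet_Ici fun y _ => hg_nonneg y
  have hIioGe : x ^ (-α) / α ≤ ∫ y in Iio (0 : ℝ), g y := by
    rw [← hValL]
    refine setIntegral_mono_on hIntL hIntIio measurableSet_Iio fun y hy => ?_
    simp only [mem_Iio] at hy
    have hxy : (0 : ℝ) < x - y := by linarith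
    have hFy : F y ≤ 0 := by
      simp only [hF_def, if_pos hy]
      linarith [(hψ01' y).1]
    rw [hg_def]
    simp only
    rw [abs_of_pos hxy, Real.rpow_neg hxy.le, ← one_div]
    have hden : (0 : ℝ) < (x - y) ^ (1 + α) := by positivity
    gcongr
    linarith
  have hge : x ^ (-α) / α ≤ ∫ y, g y := by linarith
  rw [hcongr]
  calc cα / α * x ^ (-α) = cα * (x ^ (-α) / α) := by ring
    _ ≤ cα * ∫ y, g y := mul_le_mul_of_nonneg_left hge hcα.le
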